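/- arXiv:2202.05123 — 2 statements merged into one kernel-verified Lean document; each statement's English description precedes it below -/
import Mathlib

section
/- Let R_GT and R_I be axis-aligned rectangles with R_I ⊆ R_GT and area(R_I) ≥ α · area(R_GT) for α ∈ (0,1]. Then the k-expansion of R_I with k = (2−α)/α contains R_GT. -/
/-- Axis-aligned rectangle with center `(x, y)`, half-width `w`, half-height `h`. -/
def rect (x y w h : ℝ) : Set (ℝ × ℝ) :=
  {p | |p.1 - x| ≤ w ∧ |p.2 - y| ≤ h}

/-- If `R_I ⊆ R_GT` and `area(R_I) ≥ α · area(R_GT)` for `α ∈ (0,1]`, then the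
`k`-expansion of `R_I` with `k = (2-α)/α` contains `R_GT`. Areas are
`(2·half-width)·(2·half-height)`. -/
theorem expansion_of_intersection_covers_gt
    (gx gy gw gh ix iy iw ih α : ℝ)
    (hgw : 0 < gw) (hgh : 0 < gh) (hiw : 0 < iw) (hih : 0 < ih)
    (hα : 0 < α) (hα1 : α ≤ 1)
    (hsub : rect ix iy iw ih ⊆ rect gx gy gw gh)
    (harea : α * ((2 * gw) * (2 * gh)) ≤ (2 * iw) * (2 * ih)) :
    rect gx gy gw gh ⊆ rect ix iy (((2 - α) / α) * iw) (((2 - α) / α) * ih) := by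
  have mem1 : (ix + iw, iy) ∈ rect ix iy iw ih := by
    constructor <;> simp [abs_of_nonneg hiw.le, hih.le]
  have mem2 : (ix - iw, iy) ∈ rect ix iy iw ih := by
    constructor <;> simp [abs_of_nonneg hiw.le, hih.le]
  have mem3 : (ix, iy + ih) ∈ rect ix iy iw ih := by
    constructor <;> simp [abs_of_nonneg hih.le, hiw.le]
  have mem4 : (ix, iy - ih) ∈ rect ix iy iw ih := by
    constructor <;> simp [abs_of_nonneg hih.le, hiw.le]
  have h1 := (hsub mem1).1
  have h2 := (hsub mem2).1
  have h3 := (hsub mem3).2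
  have h4 := (hsub mem4).2
  rw [abs_le] at h1 h2 h3 h4
  simp only at h1 h2 h3 h4
  -- |ix - gx| ≤ gw - iw, |iy - gy| ≤ gh - ih
  have hx : |ix - gx| ≤ gw - iw := by
    rw [abs_le]; constructor <;> linarith [h1.1, h1.2, h2.1, h2.2]
  have hy : |iy - gy| ≤ gh - ih := by
    rw [abs_le]; constructor <;> linarith [h3.1, h3.2, h4.1, h4.2]
  have hihg : ih ≤ gh := by
    have := abs_nonneg (iy - gy); linarith
  have hiwg : iw ≤ gw := by
    have := abs_nonneg (ix - gx); linarith
  have hαw : α * gw ≤ iw := by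
    nlinarith
  have hαh : α * gh ≤ ih := by
    nlinarith
  have hkw : 2 * gw - iw ≤ ((2 - α) / α) * iw := by
    rw [div_mul_eq_mul_div, le_div_iff₀ hα]; nlinarith
  have hkh : 2 * gh - ih ≤ ((2 - α) / α) * ih := by
    rw [div_mul_eq_mul_div, le_div_iff₀ hα]; nlinarith
  intro p hp
  obtain ⟨hp1, hp2⟩ := hp
  rw [abs_le] at hx hy hp1 hp2
  refine ⟨abs_le.mpr ⟨?_, ?_⟩, abs_le.mpr ⟨?_, ?_⟩⟩ <;>
    linarith [hp1.1, hp1.2, hp2.1, hp2.2, hx.1, hx.2, hy.1, hy.2]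
end

section
/- Let R_PR and R_GT be axis-aligned rectangles with positive area whose intersection is nonempty, and suppose IoU(R_PR, R_GT) ≥ α for some α ∈ (0,1]. Then the k-expansion of R_PR with k = (2−α)/α contains R_GT. -/
/-- Area of a planar set, via 2-dimensional Lebesgue measure. -/
noncomputable def area (S : Set (ℝ × ℝ)) : ℝ := (MeasureTheory.volume S).toReal

/-- Intersection-over-Union of two planar sets. -/
noncomputable def iou (A B : Set (ℝ × ℝ)) : ℝ := area (A ∩ B) / area (A ∪ B)

open MeasureTheory Set

noncomputable def overlap (p a g b : ℝ) : ℝ :=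
  max (min (p + a) (g + b) - max (p - a) (g - b)) 0

lemma overlap_nonneg (p a g b : ℝ) : 0 ≤ overlap p a g b :=
  le_max_right _ _

lemma overlap_le_left {a : ℝ} (p g b : ℝ) (ha : 0 ≤ a) : overlap p a g b ≤ 2 * a :=
  max_le (by linarith [min_le_left (p + a) (g + b), le_max_left (p - a) (g - b)]) (by linarith)

lemma overlap_le_right {b : ℝ} (p a g : ℝ) (hb : 0 ≤ b) : overlap p a g b ≤ 2 * b :=
  max_le (by linarith [min_le_right (p + a) (g + b), le_max_right (p - a) (g - b)]) (by linarith)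

lemma volume_real_Icc_inter_Icc (p a g b : ℝ) :
    volume.real (Icc (p - a) (p + a) ∩ Icc (g - b) (g + b)) = overlap p a g b := by
  rw [Icc_inter_Icc, Real.volume_real_Icc]
  rfl

lemma abs_sub_le_of_overlap_pos {p a g b t : ℝ} (hs : 0 < overlap p a g b) (ht : |t - g| ≤ b) :
    |t - p| ≤ a + 2 * b - overlap p a g b := by
  have hraw : overlap p a g b = min (p + a) (g + b) - max (p - a) (g - b) :=
    max_eq_left ((lt_max_iff.mp hs).resolve_right (lt_irrefl 0)).le
  rw [hraw]
  rw [abs_le] at ht ⊢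
  constructor <;>
    linarith [min_le_left (p + a) (g + b), min_le_right (p + a) (g + b),
      le_max_left (p - a) (g - b), le_max_right (p - a) (g - b)]

lemma rect_eq_Icc_prod (x y w h : ℝ) :
    rect x y w h = Icc (x - w) (x + w) ×ˢ Icc (y - h) (y + h) := by
  ext q
  simp only [rect, mem_ofPred_eq, mem_prod, mem_Icc, abs_le]
  constructor <;> rintro ⟨⟨_, _⟩, _, _⟩ <;> refine ⟨⟨?_, ?_⟩, ?_, ?_⟩ <;> linarith

lemma measurableSet_rect (x y w h : ℝ) : MeasurableSet (rect x y w h) := by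
  rw [rect_eq_Icc_prod]
  exact measurableSet_Icc.prod measurableSet_Icc

lemma volume_rect_ne_top (x y w h : ℝ) : volume (rect x y w h) ≠ ⊤ := by
  rw [rect_eq_Icc_prod]
  exact (isCompact_Icc.prod isCompact_Icc).measure_lt_top.ne

lemma area_rect {w h : ℝ} (x y : ℝ) (hw : 0 ≤ w) (hh : 0 ≤ h) :
    area (rect x y w h) = 4 * w * h := by
  rw [area, ← measureReal_def, rect_eq_Icc_prod, Measure.volume_eq_prod, measureReal_prod_prod,
    Real.volume_real_Icc_of_le (by linarith), Real.volume_real_Icc_of_le (by linarith)]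
  ring

lemma area_rect_inter_rect (px py pw ph gx gy gw gh : ℝ) :
    area (rect px py pw ph ∩ rect gx gy gw gh) = overlap px pw gx gw * overlap py ph gy gh := by
  rw [area, ← measureReal_def, rect_eq_Icc_prod, rect_eq_Icc_prod, prod_inter_prod,
    Measure.volume_eq_prod, measureReal_prod_prod, volume_real_Icc_inter_Icc,
    volume_real_Icc_inter_Icc]

lemma iou_rect_eq {pw ph gw gh : ℝ} (px py gx gy : ℝ)
    (hpw : 0 ≤ pw) (hph : 0 ≤ ph) (hgw : 0 ≤ gw) (hgh : 0 ≤ gh) :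
    iou (rect px py pw ph) (rect gx gy gw gh) =
      overlap px pw gx gw * overlap py ph gy gh /
        (4 * pw * ph + 4 * gw * gh - overlap px pw gx gw * overlap py ph gy gh) := by
  have hunion : area (rect px py pw ph ∪ rect gx gy gw gh) +
      area (rect px py pw ph ∩ rect gx gy gw gh) =
      area (rect px py pw ph) + area (rect gx gy gw gh) :=
    measureReal_union_add_inter (measurableSet_rect gx gy gw gh)
      (volume_rect_ne_top px py pw ph) (volume_rect_ne_top gx gy gw gh)
  rw [area_rect px py hpw hph, area_rect gx gy hgw hgh, area_rect_inter_rect] at hunion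
  rw [iou, area_rect_inter_rect, eq_sub_of_add_eq hunion]

lemma mul_union_length_le_of_mul_union_area_le {α a b c d s t : ℝ} (hα : 0 < α) (ha : 0 < a)
    (hb : 0 ≤ b) (hc : 0 < c) (hd : 0 ≤ d) (ht : 0 ≤ t) (htc : t ≤ 2 * c) (htd : t ≤ 2 * d)
    (h : α * (4 * a * c + 4 * b * d - s * t) ≤ s * t) :
    α * (2 * a + 2 * b - s) ≤ s := by
  have ht_pos : 0 < t := by
    refine ht.lt_of_ne' ?_
    rintro rfl
    nlinarith [mul_pos hα (mul_pos ha hc), mul_nonneg hα.le (mul_nonneg hb hd)]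
  refine le_of_mul_le_mul_right ?_ ht_pos
  calc α * (2 * a + 2 * b - s) * t = α * (2 * a * t + 2 * b * t - s * t) := by ring
    _ ≤ α * (4 * a * c + 4 * b * d - s * t) := by
      gcongr α * ?_
      linarith [mul_le_mul_of_nonneg_left htc ha.le, mul_le_mul_of_nonneg_left htd hb]
    _ ≤ s * t := h

lemma abs_sub_le_of_mul_union_length_le {α p a g b t : ℝ} (hα : 0 < α) (ha : 0 < a)
    (h : α * (2 * a + 2 * b - overlap p a g b) ≤ overlap p a g b) (ht : |t - g| ≤ b) :
    |t - p| ≤ (2 - α) / α * a := by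
  have hb : 0 ≤ b := (abs_nonneg _).trans ht
  have hs2a := overlap_le_left p g b ha.le
  have hs : 0 < overlap p a g b := by nlinarith [mul_pos hα ha, mul_nonneg hα.le hb]
  calc |t - p| ≤ a + 2 * b - overlap p a g b := abs_sub_le_of_overlap_pos hs ht
    _ ≤ (2 - α) / α * a := by
      rw [div_mul_eq_mul_div, le_div_iff₀ hα]
      linarith

theorem expanded_prediction_covers_gt_general
    (px py pw ph gx gy gw gh α : ℝ)
    (hpw : 0 < pw) (hph : 0 < ph) (hgw : 0 < gw) (hgh : 0 < gh)
    (hα : 0 < α)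
    (hiou : α ≤ iou (rect px py pw ph) (rect gx gy gw gh)) :
    rect gx gy gw gh ⊆ rect px py (((2 - α) / α) * pw) (((2 - α) / α) * ph) := by
  set ox := overlap px pw gx gw
  set oy := overlap py ph gy gh
  have hunion : 0 < 4 * pw * ph + 4 * gw * gh - ox * oy := by
    nlinarith [mul_le_mul (overlap_le_left px gx gw hpw.le) (overlap_le_left py gy gh hph.le)
      (overlap_nonneg py ph gy gh) (by linarith), mul_pos hgw hgh]
  rw [iou_rect_eq px py gx gy hpw.le hph.le hgw.le hgh.le, le_div_iff₀ hunion] at hiou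
  have hx : α * (2 * pw + 2 * gw - ox) ≤ ox :=
    mul_union_length_le_of_mul_union_area_le hα hpw hgw.le hph hgh.le (overlap_nonneg py ph gy gh)
      (overlap_le_left py gy gh hph.le) (overlap_le_right py ph gy hgh.le) hiou
  have hy : α * (2 * ph + 2 * gh - oy) ≤ oy :=
    mul_union_length_le_of_mul_union_area_le hα hph hgh.le hpw hgw.le (overlap_nonneg px pw gx gw)
      (overlap_le_left px gx gw hpw.le) (overlap_le_right px pw gx hgw.le) (by linarith)
  rintro q ⟨hq₁, hq₂⟩
  exact ⟨abs_sub_le_of_mul_union_length_le hα hpw hx hq₁,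
    abs_sub_le_of_mul_union_length_le hα hph hy hq₂⟩

/-- If two axis-aligned rectangles of positive area intersect and their IoU is at least
`α ∈ (0,1]`, then the `k`-expansion of the prediction with `k = (2-α)/α` contains the
ground-truth rectangle. -/
theorem expanded_prediction_covers_gt
    (px py pw ph gx gy gw gh α : ℝ)
    (hpw : 0 < pw) (hph : 0 < ph) (hgw : 0 < gw) (hgh : 0 < gh)
    (hα : 0 < α) (hα1 : α ≤ 1)
    (hne : (rect px py pw ph ∩ rect gx gy gw gh).Nonempty)
    (hiou : α ≤ iou (rect px py pw ph) (rect gx gy gw gh)) :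
    rect gx gy gw gh ⊆ rect px py (((2 - α) / α) * pw) (((2 - α) / α) * ph) :=
  expanded_prediction_covers_gt_general px py pw ph gx gy gw gh α hpw hph hgw hgh hα hiou
end
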